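/- arXiv:2406.02646 — 3 statements merged into one kernel-verified Lean document; each statement's English description precedes it below -/
import Mathlib

section
/- Let 0 < θ_* < 1, M ≥ 2, and let p̃(x|θ) = C(M,x) θ^x (1-θ)^{M-x} be the binomial Bin(M,θ) pmf. Let H ≥ 2, T_1, ..., T_{H-1} ∈ (0,1) with ∑ T_i ≤ 1, T_H := 1 - ∑_{i=1}^{H-1} T_i > 0, and suppose θ_1, ..., θ_H ∈ (0,1) satisfy ∑_{i=1}^H T_i · p̃(x|θ_i) = p̃(x|θ_*) for all x ∈ {0,1,...,M}. Then θ_1 = ··· = θ_H = θ_*. -/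
/-!
Multiplying by `C(x, k)` and summing over `x` turns the binomial pmf into its factorial moment
`C(M, k) θ^k`, so the mixture identity gives `∑ i, T i * θ i ^ k = θ_* ^ k` for `k ≤ M`.
The moments of order `0, 1, 2` say that the weighted variance `∑ i, T i * (θ i - θ_*) ^ 2`
vanishes, and positive weights force every `θ i = θ_*`.
-/

/-- Binomial pmf `Bin(M, θ)` as a function of `x` and `θ`. -/
noncomputable def binomPMF (M : ℕ) (x : ℕ) (θ : ℝ) : ℝ :=
  (M.choose x : ℝ) * θ ^ x * (1 - θ) ^ (M - x)

open Finset

lemma sum_binomPMF (M : ℕ) (θ : ℝ) : ∑ x ∈ range (M + 1), binomPMF M x θ = 1 := by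
  have := (add_pow θ (1 - θ) M).symm
  rw [add_sub_cancel, one_pow] at this
  rw [← this]
  refine sum_congr rfl fun x _ => ?_
  rw [binomPMF]
  ring

lemma choose_mul_binomPMF_add (M k j : ℕ) (θ : ℝ) :
    ((k + j).choose k : ℝ) * binomPMF M (k + j) θ
      = M.choose k * θ ^ k * binomPMF (M - k) j θ := by
  have hchoose : ((M.choose (k + j) * (k + j).choose k : ℕ) : ℝ)
      = (M.choose k * (M - k).choose j : ℕ) := by
    rw [Nat.choose_mul (Nat.le_add_right k j), Nat.add_sub_cancel_left]
  push_cast at hchoose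
  rw [binomPMF, binomPMF, ← Nat.sub_sub, pow_add]
  linear_combination θ ^ k * θ ^ j * (1 - θ) ^ (M - k - j) * hchoose

lemma sum_choose_mul_binomPMF {M k : ℕ} (hk : k ≤ M) (θ : ℝ) :
    ∑ x ∈ range (M + 1), (x.choose k : ℝ) * binomPMF M x θ = M.choose k * θ ^ k := by
  rw [show M + 1 = k + (M - k + 1) by omega, sum_range_add]
  have hlow : ∑ x ∈ range k, (x.choose k : ℝ) * binomPMF M x θ = 0 :=
    sum_eq_zero fun x hx => by rw [Nat.choose_eq_zero_of_lt (mem_range.mp hx)]; simp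
  simp_rw [hlow, zero_add, choose_mul_binomPMF_add M k, ← mul_sum, sum_binomPMF, mul_one]

lemma sum_mul_pow_eq_of_binomPMF_mixture {ι : Type*} [Fintype ι] {M : ℕ} {w θ : ι → ℝ}
    {θ₀ : ℝ} (hmix : ∀ x ≤ M, ∑ i, w i * binomPMF M x (θ i) = binomPMF M x θ₀)
    {k : ℕ} (hk : k ≤ M) : ∑ i, w i * θ i ^ k = θ₀ ^ k := by
  have hchoose : (M.choose k : ℝ) ≠ 0 := by exact_mod_cast (Nat.choose_pos hk).ne'
  apply mul_left_cancel₀ hchoose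
  calc (M.choose k : ℝ) * ∑ i, w i * θ i ^ k
      = ∑ i, w i * ∑ x ∈ range (M + 1), (x.choose k : ℝ) * binomPMF M x (θ i) := by
        simp_rw [sum_choose_mul_binomPMF hk, mul_sum]
        exact sum_congr rfl fun _ _ => by ring
    _ = ∑ x ∈ range (M + 1), (x.choose k : ℝ) * ∑ i, w i * binomPMF M x (θ i) := by
        simp_rw [mul_sum]
        rw [sum_comm]
        exact sum_congr rfl fun _ _ => sum_congr rfl fun _ _ => by ring
    _ = ∑ x ∈ range (M + 1), (x.choose k : ℝ) * binomPMF M x θ₀ :=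
        sum_congr rfl fun x hx => by rw [hmix x (Nat.lt_succ_iff.mp (mem_range.mp hx))]
    _ = M.choose k * θ₀ ^ k := sum_choose_mul_binomPMF hk θ₀

lemma eq_of_sum_mul_pow_eq_pow {ι : Type*} [Fintype ι] {w θ : ι → ℝ} {c : ℝ}
    (hw : ∀ i, 0 < w i) (hmom : ∀ k ≤ 2, ∑ i, w i * θ i ^ k = c ^ k) (i : ι) : θ i = c := by
  have hvar : ∑ j, w j * (θ j - c) ^ 2 = 0 := by
    calc ∑ j, w j * (θ j - c) ^ 2
        = ∑ j, w j * θ j ^ 2 - 2 * c * ∑ j, w j * θ j ^ 1 + c ^ 2 * ∑ j, w j * θ j ^ 0 := by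
          simp_rw [mul_sum, ← sum_sub_distrib, ← sum_add_distrib]
          exact sum_congr rfl fun _ _ => by ring
      _ = 0 := by rw [hmom 0 (by norm_num), hmom 1 (by norm_num), hmom 2 le_rfl]; ring
  have hterm := (sum_eq_zero_iff_of_nonneg fun j _ =>
    mul_nonneg (hw j).le (sq_nonneg (θ j - c))).mp hvar i (mem_univ i)
  rw [mul_eq_zero, or_iff_right (hw i).ne', sq_eq_zero_iff, sub_eq_zero] at hterm
  exact hterm

theorem binomial_mixture_identifiable_general
    (M : ℕ) (hM : 2 ≤ M) (θs : ℝ)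
    (H : ℕ)
    (T : Fin H → ℝ) (hTpos : ∀ i, 0 < T i)
    (θ : Fin H → ℝ)
    (hmix : ∀ x : ℕ, x ≤ M → ∑ i, T i * binomPMF M x (θ i) = binomPMF M x θs) :
    ∀ i, θ i = θs :=
  eq_of_sum_mul_pow_eq_pow hTpos fun _ hk =>
    sum_mul_pow_eq_of_binomPMF_mixture hmix (hk.trans hM)

theorem binomial_mixture_identifiable
    (M : ℕ) (hM : 2 ≤ M) (θs : ℝ) (hθs : 0 < θs ∧ θs < 1)
    (H : ℕ) (hH : 2 ≤ H)
    (T : Fin H → ℝ) (hTpos : ∀ i, 0 < T i) (hTlt : ∀ i, T i < 1)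
    (hTsum : ∑ i, T i = 1)
    (θ : Fin H → ℝ) (hθ : ∀ i, 0 < θ i ∧ θ i < 1)
    (hmix : ∀ x : ℕ, x ≤ M → ∑ i, T i * binomPMF M x (θ i) = binomPMF M x θs) :
    ∀ i, θ i = θs :=
  binomial_mixture_identifiable_general M hM θs H T hTpos θ hmix
end

section
/- Let p̃(x|θ) = C(M,x) θ^x (1-θ)^{M-x} with M ≥ 2 and fix θ_* ∈ (0,1). Then the two functions x ↦ ∂p̃/∂θ(x|θ_*) and x ↦ ∂²p̃/∂θ²(x|θ_*) on {0,1,...,M} are linearly independent over ℝ. -/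
/-- Binomial pmf `Bin(M, θ)` as a function of `x` and `θ`. -/
noncomputable def binomPMF' (M : ℕ) (x : ℕ) (θ : ℝ) : ℝ :=
  (M.choose x : ℝ) * θ ^ x * (1 - θ) ^ (M - x)

/-!
At `x = 0` and `x = M` the pmf is `(1 - θ) ^ M` and `θ ^ M`, so the 2 × 2 minor of the two derivative
vectors on these coordinates is `-M² (M - 1) θ^(M-2) (1 - θ)^(M-2)`, which is nonzero for `0 < θ < 1`.
-/

open Finset

theorem LinearIndependent.pair_of_mul_sub_mul_ne_zero {R ι : Type*} [CommRing R] [IsDomain R]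
    {f g : ι → R} (i j : ι) (h : f i * g j - f j * g i ≠ 0) : LinearIndependent R ![f, g] := by
  rw [LinearIndependent.pair_iff]
  intro s t hst
  have hi : s * f i + t * g i = 0 := congrFun hst i
  have hj : s * f j + t * g j = 0 := congrFun hst j
  have hs : s * (f i * g j - f j * g i) = 0 := by linear_combination g j * hi - g i * hj
  have ht : t * (f i * g j - f j * g i) = 0 := by linear_combination f i * hj - f j * hi
  exact ⟨(mul_eq_zero.1 hs).resolve_right h, (mul_eq_zero.1 ht).resolve_right h⟩

theorem iter_deriv_const_sub_pow {𝕜 : Type*} [NontriviallyNormedField 𝕜] (a x : 𝕜) (n k : ℕ) :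
    deriv^[k] (fun y => (a - y) ^ n) x
      = (-1) ^ k * (∏ i ∈ range k, ((n : 𝕜) - i)) * (a - x) ^ (n - k) := by
  rw [← iteratedDeriv_eq_iterate, iteratedDeriv_comp_const_sub (f := fun y => y ^ n),
    iteratedDeriv_eq_iterate, iter_deriv_pow']
  simp only [smul_eq_mul, mul_assoc]

theorem binomPMF'_zero (M : ℕ) (θ : ℝ) : binomPMF' M 0 θ = (1 - θ) ^ M := by
  simp [binomPMF']

theorem binomPMF'_self (M : ℕ) (θ : ℝ) : binomPMF' M M θ = θ ^ M := by
  simp [binomPMF']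

theorem binomial_derivatives_linearIndependent
    (M : ℕ) (hM : 2 ≤ M) (θs : ℝ) (hθs : 0 < θs ∧ θs < 1) :
    LinearIndependent ℝ
      ![(fun x : Fin (M + 1) => deriv (fun θ => binomPMF' M x θ) θs),
        (fun x : Fin (M + 1) => deriv (deriv (fun θ => binomPMF' M x θ)) θs)] := by
  obtain ⟨k, rfl⟩ := Nat.exists_eq_add_of_le' hM
  have hθ : θs ≠ 0 := hθs.1.ne'
  have hθ' : 1 - θs ≠ 0 := (sub_pos.2 hθs.2).ne'
  refine .pair_of_mul_sub_mul_ne_zero 0 (Fin.last (k + 2)) ?_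
  calc _ = deriv^[1] (fun θ => (1 - θ) ^ (k + 2)) θs * deriv^[2] (fun θ => θ ^ (k + 2)) θs
        - deriv^[1] (fun θ => θ ^ (k + 2)) θs * deriv^[2] (fun θ => (1 - θ) ^ (k + 2)) θs := by
          simp only [Fin.val_zero, Fin.val_last, binomPMF'_zero, binomPMF'_self]; rfl
    _ = -((k + 2) ^ 2 * (k + 1) * θs ^ k * (1 - θs) ^ k) := by
          rw [iter_deriv_const_sub_pow, iter_deriv_const_sub_pow, iter_deriv_pow, iter_deriv_pow]
          simp only [prod_range_succ, prod_range_zero, Nat.reduceSubDiff]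
          push_cast
          ring
    _ ≠ 0 := neg_ne_zero.2 (by positivity)
end

section
/- Let φ : ℝ^d → ℝ^d be the shear map φ(θ)_k = θ_k + a_k(θ_{r+1},...,θ_d) for k ≤ r and φ(θ)_k = θ_k for k > r, where a_k is the monomial (c_k/(i_{r+1}!···i_d!)) θ_{r+1}^{i_{r+1}}···θ_d^{i_d} of total degree m := i_{r+1}+···+i_d ≥ 1. Let f : ℝ^d → ℝ be smooth and g := f ∘ φ^{-1}. Then for every multi-index (h_{r+1},...,h_d) with h_{r+1}+···+h_d ≤ m: if (h_{r+1},...,h_d) ≠ (i_{r+1},...,i_d) then ∂^{|h|} g / ∂θ_{r+1}^{h_{r+1}}···∂θ_d^{h_d} (0) = ∂^{|h|} f / ∂θ_{r+1}^{h_{r+1}}···∂θ_d^{h_d} (0), and if (h_{r+1},...,h_d) = (i_{r+1},...,i_d) then ∂^{m} g / ∂θ_{r+1}^{i_{r+1}}···∂θ_d^{i_d} (0) = ∂^{m} f / ∂θ_{r+1}^{i_{r+1}}···∂θ_d^{i_d} (0) − ∑_{k=1}^r c_k ∂f/∂θ_k(0). -/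
open scoped BigOperators

noncomputable def Dd (d : ℕ) (v : Fin d → ℝ) (f : (Fin d → ℝ) → ℝ) : (Fin d → ℝ) → ℝ :=
  fun x => fderiv ℝ f x v

noncomputable def DL (d : ℕ) (L : List (Fin d)) (f : (Fin d → ℝ) → ℝ) : (Fin d → ℝ) → ℝ :=
  L.foldl (fun g k => Dd d (Pi.single k 1) g) f

lemma DL_nil (d : ℕ) (f : (Fin d → ℝ) → ℝ) : DL d [] f = f := rfl

lemma DL_cons (d : ℕ) (k : Fin d) (L : List (Fin d)) (f : (Fin d → ℝ) → ℝ) :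
    DL d (k :: L) f = DL d L (Dd d (Pi.single k 1) f) := rfl

lemma DL_snoc (d : ℕ) (k : Fin d) (L : List (Fin d)) (f : (Fin d → ℝ) → ℝ) :
    DL d (L ++ [k]) f = Dd d (Pi.single k 1) (DL d L f) := by
  simp [DL, List.foldl_append]

lemma DL_DL (d : ℕ) (L M : List (Fin d)) (f : (Fin d → ℝ) → ℝ) :
    DL d M (DL d L f) = DL d (L ++ M) f := by
  simp [DL, List.foldl_append]

lemma Dd_smooth (d : ℕ) (v : Fin d → ℝ) {f : (Fin d → ℝ) → ℝ} (hf : ContDiff ℝ (⊤ : ℕ∞) f) :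
    ContDiff ℝ (⊤ : ℕ∞) (Dd d v f) :=
  (hf.fderiv_right (by simp)).clm_apply contDiff_const

lemma DL_smooth (d : ℕ) (L : List (Fin d)) {f : (Fin d → ℝ) → ℝ} (hf : ContDiff ℝ (⊤ : ℕ∞) f) :
    ContDiff ℝ (⊤ : ℕ∞) (DL d L f) := by
  induction L generalizing f with
  | nil => exact hf
  | cons k L ih => exact ih (Dd_smooth d _ hf)

lemma Dd_zero (d : ℕ) (v : Fin d → ℝ) : Dd d v (fun _ => (0:ℝ)) = fun _ => (0:ℝ) := by
  funext x
  simp [Dd, fderiv_const]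

lemma DL_zero (d : ℕ) (L : List (Fin d)) : DL d L (fun _ => (0:ℝ)) = fun _ => (0:ℝ) := by
  induction L with
  | nil => rfl
  | cons k L ih => rw [DL_cons, Dd_zero]; exact ih

lemma Dd_add (d : ℕ) (v : Fin d → ℝ) {f g : (Fin d → ℝ) → ℝ}
    (hf : ContDiff ℝ (⊤ : ℕ∞) f) (hg : ContDiff ℝ (⊤ : ℕ∞) g) :
    Dd d v (fun θ => f θ + g θ) = fun θ => Dd d v f θ + Dd d v g θ := by
  funext x
  simp only [Dd]
  rw [fderiv_fun_add ((hf.differentiable (by simp)) x) ((hg.differentiable (by simp)) x)]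
  rfl

lemma DL_add (d : ℕ) (L : List (Fin d)) {f g : (Fin d → ℝ) → ℝ}
    (hf : ContDiff ℝ (⊤ : ℕ∞) f) (hg : ContDiff ℝ (⊤ : ℕ∞) g) :
    DL d L (fun θ => f θ + g θ) = fun θ => DL d L f θ + DL d L g θ := by
  induction L generalizing f g with
  | nil => rfl
  | cons k L ih =>
      rw [DL_cons, Dd_add d _ hf hg, ih (Dd_smooth d _ hf) (Dd_smooth d _ hg)]
      rfl

lemma Dd_mul (d : ℕ) (v : Fin d → ℝ) {f g : (Fin d → ℝ) → ℝ}
    (hf : ContDiff ℝ (⊤ : ℕ∞) f) (hg : ContDiff ℝ (⊤ : ℕ∞) g) :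
    Dd d v (fun θ => f θ * g θ) = fun θ => Dd d v f θ * g θ + f θ * Dd d v g θ := by
  funext x
  simp only [Dd]
  rw [fderiv_fun_mul ((hf.differentiable (by simp)) x) ((hg.differentiable (by simp)) x)]
  simp [mul_comm]
  ring


lemma DL_mul_vanish (d : ℕ) :
    ∀ (M : List (Fin d)) (φ ρ : (Fin d → ℝ) → ℝ), ContDiff ℝ (⊤ : ℕ∞) φ → ContDiff ℝ (⊤ : ℕ∞) ρ →
      (∀ M' : List (Fin d), M'.length ≤ M.length → DL d M' φ 0 = 0) →
      DL d M (fun θ => φ θ * ρ θ) 0 = 0 := by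
  intro M
  induction M with
  | nil =>
      intro φ ρ hφ hρ hv
      have h0 : φ 0 = 0 := hv [] (by simp)
      simp only [DL, List.foldl_nil]
      rw [h0, zero_mul]
  | cons k M ih =>
      intro φ ρ hφ hρ hv
      rw [DL_cons, Dd_mul d _ hφ hρ,
        DL_add d M ((Dd_smooth d _ hφ).mul hρ) (hφ.mul (Dd_smooth d _ hρ))]
      have h1 : DL d M (fun θ => Dd d (Pi.single k 1) φ θ * ρ θ) 0 = 0 := by
        apply ih _ _ (Dd_smooth d _ hφ) hρ
        intro M' hM'
        have := hv (k :: M') (by simpa using Nat.succ_le_succ hM')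
        rwa [DL_cons] at this
      have h2 : DL d M (fun θ => φ θ * Dd d (Pi.single k 1) ρ θ) 0 = 0 := by
        apply ih _ _ hφ (Dd_smooth d _ hρ)
        intro M' hM'
        exact hv M' (le_trans hM' (Nat.le_succ _))
      simp only [h1, h2, add_zero]

section chain
variable {d : ℕ} {u : (Fin d → ℝ) → ℝ} {w : Fin d → ℝ} {ψ : (Fin d → ℝ) → (Fin d → ℝ)}

lemma psi_smooth (hψ : ψ = fun θ => θ - u θ • w) (hu : ContDiff ℝ (⊤ : ℕ∞) u) :
    ContDiff ℝ (⊤ : ℕ∞) ψ := by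
  rw [hψ]; exact contDiff_id.sub (hu.smul contDiff_const)

lemma hasFDerivAt_psi (hψ : ψ = fun θ => θ - u θ • w) (hu : ContDiff ℝ (⊤ : ℕ∞) u)
    (x : Fin d → ℝ) :
    HasFDerivAt ψ (ContinuousLinearMap.id ℝ (Fin d → ℝ) - (fderiv ℝ u x).smulRight w) x := by
  rw [hψ]
  have h1 : HasFDerivAt (fun θ : Fin d → ℝ => u θ • w) ((fderiv ℝ u x).smulRight w) x := by
    have := (((hu.differentiable (by simp)) x).hasFDerivAt).smul (hasFDerivAt_const w x)
    simpa using this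
  simpa using (hasFDerivAt_id x).sub h1

lemma Dd_comp (hψ : ψ = fun θ => θ - u θ • w) (hu : ContDiff ℝ (⊤ : ℕ∞) u)
    {g : (Fin d → ℝ) → ℝ} (hg : ContDiff ℝ (⊤ : ℕ∞) g) (v : Fin d → ℝ) :
    Dd d v (fun θ => g (ψ θ)) =
      fun θ => Dd d v g (ψ θ) - Dd d v u θ * Dd d w g (ψ θ) := by
  funext x
  have hψx := hasFDerivAt_psi hψ hu x
  have hgx : HasFDerivAt g (fderiv ℝ g (ψ x)) (ψ x) :=
    ((hg.differentiable (by simp)) (ψ x)).hasFDerivAt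
  have hc : HasFDerivAt (fun θ => g (ψ θ))
      ((fderiv ℝ g (ψ x)).comp (ContinuousLinearMap.id ℝ (Fin d → ℝ) - (fderiv ℝ u x).smulRight w)) x :=
    hgx.comp x hψx
  simp only [Dd]
  rw [hc.fderiv]
  simp [map_sub, map_smul, smul_eq_mul, mul_comm]
end chain

inductive Van (d : ℕ) (ψ : (Fin d → ℝ) → (Fin d → ℝ)) (b : ℕ) : ((Fin d → ℝ) → ℝ) → Prop
  | zero : Van d ψ b (fun _ => 0)
  | add {R S : (Fin d → ℝ) → ℝ} : Van d ψ b R → Van d ψ b S → Van d ψ b (fun θ => R θ + S θ)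
  | term (φ g : (Fin d → ℝ) → ℝ) (hφ : ContDiff ℝ (⊤ : ℕ∞) φ) (hg : ContDiff ℝ (⊤ : ℕ∞) g)
      (h0 : ∀ M : List (Fin d), M.length ≤ b → DL d M φ 0 = 0) :
      Van d ψ b (fun θ => φ θ * g (ψ θ))

lemma Van.smooth {d b ψ} {R} (hψs : ContDiff ℝ (⊤ : ℕ∞) ψ) (h : Van d ψ b R) :
    ContDiff ℝ (⊤ : ℕ∞) R := by
  induction h with
  | zero => exact contDiff_const
  | add h1 h2 ih1 ih2 => exact ih1.add ih2
  | term φ g hφ hg h0 => exact hφ.mul (hg.comp hψs)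

lemma Van.eval_zero {d b ψ} {R} (h : Van d ψ b R) : R 0 = 0 := by
  induction h with
  | zero => rfl
  | add h1 h2 ih1 ih2 => simp [ih1, ih2]
  | term φ g hφ hg h0 =>
      have : φ 0 = 0 := h0 [] (by simp)
      simp [this]

lemma Van.deriv {d b : ℕ} {u : (Fin d → ℝ) → ℝ} {w : Fin d → ℝ} {ψ}
    (hψ : ψ = fun θ => θ - u θ • w) (hu : ContDiff ℝ (⊤ : ℕ∞) u) (k : Fin d)
    {R} (h : Van d ψ (b + 1) R) : Van d ψ b (Dd d (Pi.single k 1) R) := by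
  have hψs : ContDiff ℝ (⊤ : ℕ∞) ψ := psi_smooth hψ hu
  induction h with
  | zero => rw [Dd_zero]; exact Van.zero
  | @add R S h1 h2 ih1 ih2 =>
      rw [Dd_add d _ (h1.smooth hψs) (h2.smooth hψs)]
      exact Van.add ih1 ih2
  | term φ g hφ hg h0 =>
      have hgψ : ContDiff ℝ (⊤ : ℕ∞) (fun θ => g (ψ θ)) := hg.comp hψs
      rw [Dd_mul d _ hφ hgψ]
      have hE : (fun θ => Dd d (Pi.single k 1) φ θ * g (ψ θ)
              + φ θ * Dd d (Pi.single k 1) (fun θ => g (ψ θ)) θ)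
          = fun θ => (Dd d (Pi.single k 1) φ θ * g (ψ θ))
              + ((φ θ * (Dd d (Pi.single k 1) g) (ψ θ))
              + ((φ θ * (-(Dd d (Pi.single k 1) u θ))) * (Dd d w g) (ψ θ))) := by
        funext θ
        rw [Dd_comp hψ hu hg]
        ring
      rw [hE]
      refine Van.add (Van.term _ g (Dd_smooth d _ hφ) hg ?_)
        (Van.add (Van.term φ _ hφ (Dd_smooth d _ hg) ?_)
          (Van.term _ _ (hφ.mul (Dd_smooth d _ hu).neg) (Dd_smooth d _ hg) ?_))
      · intro M hM
        have := h0 (k :: M) (by simpa using Nat.succ_le_succ hM)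
        rwa [DL_cons] at this
      · intro M hM
        exact h0 M (le_trans hM (Nat.le_succ _))
      · intro M hM
        exact DL_mul_vanish d M φ _ hφ (Dd_smooth d _ hu).neg
          (fun M' hM' => h0 M' (le_trans (le_trans hM' hM) (Nat.le_succ _)))

noncomputable def mono (d : ℕ) (A : ℝ) (e : Fin d → ℕ) : (Fin d → ℝ) → ℝ :=
  fun θ => A * ∏ j, θ j ^ e j

lemma mono_smooth (d : ℕ) (A : ℝ) (e : Fin d → ℕ) : ContDiff ℝ (⊤ : ℕ∞) (mono d A e) :=
  contDiff_const.mul (contDiff_prod fun j _ =>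
    ((ContinuousLinearMap.proj j : (Fin d → ℝ) →L[ℝ] ℝ).contDiff).pow (e j))

lemma mono_zero_coeff (d : ℕ) (e : Fin d → ℕ) : mono d 0 e = fun _ => (0:ℝ) := by
  funext θ; simp [mono]

lemma Dd_mono (d : ℕ) (A : ℝ) (e : Fin d → ℕ) (k : Fin d) :
    Dd d (Pi.single k 1) (mono d A e)
      = mono d (A * e k) (Function.update e k (e k - 1)) := by
  funext θ
  have hj : ∀ j : Fin d, HasFDerivAt (fun θ : Fin d → ℝ => θ j ^ e j)
      ((e j * θ j ^ (e j - 1)) • (ContinuousLinearMap.proj j : (Fin d → ℝ) →L[ℝ] ℝ)) θ :=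
    fun j => by
      have h1 : HasDerivAt (fun y : ℝ => y ^ e j) ((e j : ℝ) * θ j ^ (e j - 1)) (θ j) :=
        hasDerivAt_pow (e j) (θ j)
      have h2 := h1.comp_hasFDerivAt θ
        (ContinuousLinearMap.proj j : (Fin d → ℝ) →L[ℝ] ℝ).hasFDerivAt
      exact h2
  have hprod : HasFDerivAt (fun θ : Fin d → ℝ => ∏ j, θ j ^ e j)
      (∑ i, (∏ j ∈ Finset.univ.erase i, θ j ^ e j) •
        ((e i * θ i ^ (e i - 1)) • (ContinuousLinearMap.proj i : (Fin d → ℝ) →L[ℝ] ℝ))) θ :=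
    HasFDerivAt.finset_prod (fun i _ => hj i)
  have hm : HasFDerivAt (mono d A e)
      (A • (∑ i, (∏ j ∈ Finset.univ.erase i, θ j ^ e j) •
        ((e i * θ i ^ (e i - 1)) • (ContinuousLinearMap.proj i : (Fin d → ℝ) →L[ℝ] ℝ)))) θ :=
    hprod.const_mul A
  simp only [Dd]
  rw [hm.fderiv]
  simp only [ContinuousLinearMap.smul_apply, ContinuousLinearMap.sum_apply,
    ContinuousLinearMap.proj_apply, smul_eq_mul]
  have hsingle : ∀ i : Fin d, (Pi.single k 1 : Fin d → ℝ) i = if i = k then 1 else 0 := by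
    intro i; simp [Pi.single_apply]
  have hsum : (∑ i, (∏ j ∈ Finset.univ.erase i, θ j ^ e j) *
        ((e i * θ i ^ (e i - 1)) * (Pi.single k 1 : Fin d → ℝ) i))
      = (∏ j ∈ Finset.univ.erase k, θ j ^ e j) * (e k * θ k ^ (e k - 1)) := by
    rw [Finset.sum_eq_single k]
    · rw [hsingle k]; simp
    · intro i _ hik; rw [hsingle i, if_neg hik]; ring
    · intro h; exact absurd (Finset.mem_univ k) h
  rw [hsum]
  have hupdate : (∏ j, θ j ^ (Function.update e k (e k - 1)) j)
      = θ k ^ (e k - 1) * ∏ j ∈ Finset.univ.erase k, θ j ^ e j := by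
    have : (fun j => θ j ^ (Function.update e k (e k - 1)) j)
        = Function.update (fun j => θ j ^ e j) k (θ k ^ (e k - 1)) := by
      funext j
      by_cases hjk : j = k
      · subst hjk; simp
      · simp [Function.update_of_ne hjk]
    rw [this, Finset.prod_update_of_mem (Finset.mem_univ k)]
    rw [Finset.sdiff_singleton_eq_erase]
  simp only [mono]
  rw [hupdate]
  ring

lemma sum_update_pred (d : ℕ) (e : Fin d → ℕ) (k : Fin d) (hk : 1 ≤ e k) :
    ∑ j, (Function.update e k (e k - 1)) j = (∑ j, e j) - 1 := by
  rw [Finset.sum_update_of_mem (Finset.mem_univ k), Finset.sdiff_singleton_eq_erase]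
  have h2 : ∑ j, e j = e k + ∑ j ∈ Finset.univ.erase k, e j :=
    (Finset.add_sum_erase _ _ (Finset.mem_univ k)).symm
  omega

lemma DL_mono_lt (d : ℕ) :
    ∀ (M : List (Fin d)) (A : ℝ) (e : Fin d → ℕ), M.length < ∑ j, e j →
      DL d M (mono d A e) 0 = 0 := by
  intro M
  induction M with
  | nil =>
      intro A e he
      simp only [DL, List.foldl_nil, mono]
      obtain ⟨j, hj⟩ : ∃ j, e j ≠ 0 := by
        by_contra h
        push_neg at h
        simp [h] at he
      rw [Finset.prod_eq_zero (Finset.mem_univ j) (by simp [zero_pow hj]), mul_zero]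
  | cons k M ih =>
      intro A e he
      rw [DL_cons, Dd_mono]
      by_cases hk : e k = 0
      · rw [hk]
        push_cast
        rw [mul_zero, mono_zero_coeff, DL_zero]
      · apply ih
        rw [sum_update_pred d e k (Nat.one_le_iff_ne_zero.mpr hk)]
        simp only [List.length_cons] at he
        omega

lemma DL_mono_eq (d : ℕ) :
    ∀ (M : List (Fin d)) (A : ℝ) (e : Fin d → ℕ), M.length = ∑ j, e j →
      DL d M (mono d A e) 0
        = A * (if ∀ k, M.count k = e k then ((∏ j, (e j).factorial : ℕ) : ℝ) else 0) := by
  intro M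
  induction M with
  | nil =>
      intro A e he
      have he0 : ∀ j, e j = 0 := by
        intro j
        have := Finset.sum_eq_zero_iff.mp he.symm
        exact this j (Finset.mem_univ j)
      have hcond : ∀ k : Fin d, ([] : List (Fin d)).count k = e k := by
        intro k; simp [he0 k]
      rw [if_pos hcond]
      simp only [DL, List.foldl_nil, mono]
      simp [he0]
  | cons k M ih =>
      intro A e he
      rw [DL_cons, Dd_mono]
      by_cases hk : e k = 0
      · rw [hk]
        push_cast
        rw [mul_zero, mono_zero_coeff, DL_zero]
        have hcond : ¬ ∀ j : Fin d, (k :: M).count j = e j := by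
          intro h
          have := h k
          simp [List.count_cons_self, hk] at this
        rw [if_neg hcond, mul_zero]
      · have hk1 : 1 ≤ e k := Nat.one_le_iff_ne_zero.mpr hk
        have hlen : M.length = ∑ j, (Function.update e k (e k - 1)) j := by
          rw [sum_update_pred d e k hk1]
          simp only [List.length_cons] at he
          omega
        rw [ih _ _ hlen]
        have hcondiff : (∀ j, M.count j = (Function.update e k (e k - 1)) j)
            ↔ (∀ j : Fin d, (k :: M).count j = e j) := by
          constructor
          · intro h j
            have := h j
            by_cases hjk : j = k
            · subst hjk
              simp only [Function.update_self] at this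
              simp [List.count_cons_self]
              omega
            · simp only [Function.update_of_ne hjk] at this
              rw [List.count_cons_of_ne (Ne.symm hjk)]
              exact this
          · intro h j
            have := h j
            by_cases hjk : j = k
            · subst hjk
              simp only [List.count_cons_self] at this
              simp only [Function.update_self]
              omega
            · rw [List.count_cons_of_ne (Ne.symm hjk)] at this
              simp only [Function.update_of_ne hjk]
              exact this
        by_cases hc : ∀ j : Fin d, (k :: M).count j = e j
        · rw [if_pos hc, if_pos (hcondiff.mpr hc)]
          have hfact : (e k) * ∏ j, ((Function.update e k (e k - 1)) j).factorial
              = ∏ j, (e j).factorial := by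
            have hfun : (fun j => ((Function.update e k (e k - 1)) j).factorial)
                = Function.update (fun j => (e j).factorial) k ((e k - 1).factorial) := by
              funext j
              by_cases hjk : j = k
              · subst hjk; simp
              · simp [Function.update_of_ne hjk]
            rw [hfun, Finset.prod_update_of_mem (Finset.mem_univ k),
              Finset.sdiff_singleton_eq_erase,
              ← Finset.mul_prod_erase _ (fun j => (e j).factorial) (Finset.mem_univ k),
              ← mul_assoc, Nat.mul_factorial_pred (by omega)]
          rw [← hfact]
          push_cast
          ring
        · rw [if_neg hc, if_neg (fun h => hc (hcondiff.mp h)), mul_zero, mul_zero]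

lemma Dd_sub_add (d : ℕ) (v : Fin d → ℝ) {A B R : (Fin d → ℝ) → ℝ}
    (hA : ContDiff ℝ (⊤ : ℕ∞) A) (hB : ContDiff ℝ (⊤ : ℕ∞) B) (hR : ContDiff ℝ (⊤ : ℕ∞) R) :
    Dd d v (fun θ => A θ - B θ + R θ)
      = fun θ => Dd d v A θ - Dd d v B θ + Dd d v R θ := by
  funext x
  have hAx := ((hA.differentiable (by simp)) x).hasFDerivAt
  have hBx := ((hB.differentiable (by simp)) x).hasFDerivAt
  have hRx := ((hR.differentiable (by simp)) x).hasFDerivAt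
  have h := ((hAx.fun_sub hBx).fun_add hRx).fderiv
  simp only [Dd, h]
  rfl

lemma shear_main {d m : ℕ} {u f : (Fin d → ℝ) → ℝ} {w : Fin d → ℝ}
    {ψ : (Fin d → ℝ) → (Fin d → ℝ)}
    (hψ : ψ = fun θ => θ - u θ • w) (hu : ContDiff ℝ (⊤ : ℕ∞) u)
    (hum : ∀ M : List (Fin d), M.length < m → DL d M u 0 = 0)
    (hf : ContDiff ℝ (⊤ : ℕ∞) f) :
    ∀ L : List (Fin d), L ≠ [] → L.length ≤ m →
      ∃ R, Van d ψ (m - L.length) R ∧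
        DL d L (fun θ => f (ψ θ))
          = fun θ => DL d L f (ψ θ) - DL d L u θ * Dd d w f (ψ θ) + R θ := by
  have hψs : ContDiff ℝ (⊤ : ℕ∞) ψ := psi_smooth hψ hu
  intro L
  induction L using List.reverseRecOn with
  | nil => intro h; exact absurd rfl h
  | append_singleton L k ih =>
      intro _ hlen
      have hlen' : L.length + 1 ≤ m := by simpa using hlen
      rcases eq_or_ne L [] with rfl | hne
      · -- base case : single derivative
        refine ⟨fun _ => 0, Van.zero, ?_⟩
        have h0 : DL d ([] ++ [k]) (fun θ => f (ψ θ))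
            = Dd d (Pi.single k 1) (fun θ => f (ψ θ)) := DL_snoc d k [] _
        rw [h0, Dd_comp hψ hu hf]
        funext θ
        have h1 : DL d ([] ++ [k]) f = Dd d (Pi.single k 1) f := DL_snoc d k [] f
        have h2 : DL d ([] ++ [k]) u = Dd d (Pi.single k 1) u := DL_snoc d k [] u
        rw [h1, h2]
        ring
      · obtain ⟨R, hR, hDL⟩ := ih hne (le_trans (Nat.le_succ _) hlen')
        have hL1 : 1 ≤ L.length := List.length_pos_iff.mpr hne
        have hRs : ContDiff ℝ (⊤ : ℕ∞) R := hR.smooth hψs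
        have hDLf : ContDiff ℝ (⊤ : ℕ∞) (DL d L f) := DL_smooth d L hf
        have hDLu : ContDiff ℝ (⊤ : ℕ∞) (DL d L u) := DL_smooth d L hu
        have hDwf : ContDiff ℝ (⊤ : ℕ∞) (Dd d w f) := Dd_smooth d w hf
        have hA : ContDiff ℝ (⊤ : ℕ∞) (fun θ => DL d L f (ψ θ)) := hDLf.comp hψs
        have hgψ : ContDiff ℝ (⊤ : ℕ∞) (fun θ => Dd d w f (ψ θ)) := hDwf.comp hψs
        have hB : ContDiff ℝ (⊤ : ℕ∞) (fun θ => DL d L u θ * Dd d w f (ψ θ)) := hDLu.mul hgψ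
        -- candidate remainder
        refine ⟨fun θ =>
            (Dd d (Pi.single k 1) u θ * (-(Dd d w (DL d L f) (ψ θ)))
            + (DL d L u θ * (-(Dd d (Pi.single k 1) (Dd d w f) (ψ θ)))
            + (DL d L u θ * Dd d (Pi.single k 1) u θ) * (Dd d w (Dd d w f)) (ψ θ)))
            + Dd d (Pi.single k 1) R θ, ?_, ?_⟩
        · -- Van property
          have hb : m - L.length = (m - (L ++ [k]).length) + 1 := by
            simp only [List.length_append, List.length_singleton]
            omega
          rw [hb] at hR
          refine Van.add (Van.add ?_ (Van.add ?_ ?_)) (Van.deriv hψ hu k hR)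
          · exact Van.term (Dd d (Pi.single k 1) u) (fun x => -(Dd d w (DL d L f) x))
              (Dd_smooth d _ hu) (Dd_smooth d w hDLf).neg
              (by
                intro M hM
                have h1 : DL d M (Dd d (Pi.single k 1) u) 0 = DL d (k :: M) u 0 := by
                  rw [DL_cons]
                rw [h1]
                apply hum
                simp only [List.length_cons]
                simp only [List.length_append, List.length_singleton] at hM
                omega)
          · exact Van.term (DL d L u) (fun x => -(Dd d (Pi.single k 1) (Dd d w f) x))
              hDLu (Dd_smooth d _ (Dd_smooth d w hf)).neg
              (by
                intro M hM
                rw [DL_DL]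
                apply hum
                simp only [List.length_append]
                simp only [List.length_append, List.length_singleton] at hM
                omega)
          · exact Van.term (fun θ => DL d L u θ * Dd d (Pi.single k 1) u θ)
              (Dd d w (Dd d w f)) (hDLu.mul (Dd_smooth d _ hu))
              (Dd_smooth d w (Dd_smooth d w hf))
              (by
                intro M hM
                apply DL_mul_vanish d M _ _ hDLu (Dd_smooth d _ hu)
                intro M' hM'
                rw [DL_DL]
                apply hum
                simp only [List.length_append]
                simp only [List.length_append, List.length_singleton] at hM
                omega)
        · -- the derivative formula
          rw [DL_snoc, hDL, Dd_sub_add d _ hA hB hRs]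
          have hderivA : Dd d (Pi.single k 1) (fun θ => DL d L f (ψ θ))
              = fun θ => Dd d (Pi.single k 1) (DL d L f) (ψ θ)
                  - Dd d (Pi.single k 1) u θ * Dd d w (DL d L f) (ψ θ) :=
            Dd_comp hψ hu hDLf _
          have hderivgψ : Dd d (Pi.single k 1) (fun θ => Dd d w f (ψ θ))
              = fun θ => Dd d (Pi.single k 1) (Dd d w f) (ψ θ)
                  - Dd d (Pi.single k 1) u θ * Dd d w (Dd d w f) (ψ θ) :=
            Dd_comp hψ hu hDwf _
          have hderivB : Dd d (Pi.single k 1) (fun θ => DL d L u θ * Dd d w f (ψ θ))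
              = fun θ => Dd d (Pi.single k 1) (DL d L u) θ * Dd d w f (ψ θ)
                  + DL d L u θ * Dd d (Pi.single k 1) (fun θ => Dd d w f (ψ θ)) θ :=
            Dd_mul d _ hDLu hgψ
          rw [hderivA, hderivB, hderivgψ]
          funext θ
          have e1 : DL d (L ++ [k]) f = Dd d (Pi.single k 1) (DL d L f) := DL_snoc d k L f
          have e2 : DL d (L ++ [k]) u = Dd d (Pi.single k 1) (DL d L u) := DL_snoc d k L u
          rw [e1, e2]
          ring

lemma iter_eq_DL (d : ℕ) :
    ∀ (n : ℕ) (dirs : Fin n → Fin d) (h : (Fin d → ℝ) → ℝ), ContDiff ℝ (⊤ : ℕ∞) h →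
      ∀ x, iteratedFDeriv ℝ n h x (fun j => Pi.single (dirs j) 1)
        = DL d ((List.ofFn dirs).reverse) h x := by
  intro n
  induction n with
  | zero =>
      intro dirs h hh x
      simp [iteratedFDeriv_zero_apply, DL]
  | succ n ih =>
      intro dirs h hh x
      rw [iteratedFDeriv_succ_apply_right]
      have hfd : ContDiff ℝ (⊤ : ℕ∞) (fderiv ℝ h) := hh.fderiv_right (by simp)
      have hcomp := (ContinuousLinearMap.apply ℝ ℝ
          (Pi.single (dirs (Fin.last n)) 1 : Fin d → ℝ)).iteratedFDeriv_comp_left (hfd.contDiffAt (x := x))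
        (i := n) (by exact_mod_cast le_top)
      refine Eq.trans (b := iteratedFDeriv ℝ n (Dd d (Pi.single (dirs (Fin.last n)) 1) h) x
        (fun j : Fin n => Pi.single (dirs j.castSucc) 1)) ?_ ?_
      · exact (congrFun (congrArg DFunLike.coe hcomp)
          (fun j : Fin n => Pi.single (dirs j.castSucc) 1)).symm
      · rw [ih (fun j => dirs j.castSucc) _ (Dd_smooth d _ hh) x]
        have hlist : (List.ofFn dirs).reverse
            = dirs (Fin.last n) :: (List.ofFn fun j : Fin n => dirs j.castSucc).reverse := by
          rw [List.ofFn_succ']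
          simp [List.concat_eq_append]
        rw [hlist, DL_cons]

lemma count_ofFn (d : ℕ) : ∀ (n : ℕ) (dirs : Fin n → Fin d) (k : Fin d),
    (List.ofFn dirs).count k = (Finset.univ.filter fun j => dirs j = k).card := by
  intro n
  induction n with
  | zero => intro dirs k; simp
  | succ n ih =>
      intro dirs k
      rw [List.ofFn_succ]
      simp only [List.count_cons, beq_iff_eq]
      rw [ih (fun i => dirs i.succ) k, Finset.card_filter, Finset.card_filter,
        Fin.sum_univ_succ]
      exact add_comm _ _

lemma sum_card_filter_eq (d n : ℕ) (dirs : Fin n → Fin d) :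
    ∑ k, (Finset.univ.filter fun j => dirs j = k).card = n := by
  simp only [Finset.card_filter]
  rw [Finset.sum_comm]
  simp


/-- Effect of a homogeneous shear coordinate change on pure partial derivatives in the
last `d - r` variables, up to order `m`, at the origin.  A pure partial derivative of order
`n` along the coordinates `dirs : Fin n → Fin d` is expressed as
`iteratedFDeriv ℝ n f 0` applied to the basis directions `Pi.single (dirs j) 1`. -/
theorem shear_map_effect_on_derivatives
    (r d : ℕ) (hr : 1 ≤ r) (hrd : r < d)
    (idx : Fin d → ℕ) (hsupp : ∀ k : Fin d, (k : ℕ) < r → idx k = 0)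
    (m : ℕ) (hm : m = ∑ k, idx k) (hm1 : 1 ≤ m)
    (c : Fin d → ℝ)
    (φ ψ : (Fin d → ℝ) → (Fin d → ℝ))
    (hφ : ∀ θ k, φ θ k =
      if (k : ℕ) < r then
        θ k + (c k / ∏ j, ((idx j).factorial : ℝ)) * ∏ j, θ j ^ idx j
      else θ k)
    (hψφ : Function.LeftInverse ψ φ) (hφψ : Function.RightInverse ψ φ)
    (f : (Fin d → ℝ) → ℝ) (hf : ContDiff ℝ (⊤ : ℕ∞) f) :
    ∀ (n : ℕ) (dirs : Fin n → Fin d),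
      (∀ j, r ≤ ((dirs j : ℕ))) → n ≤ m →
      (((¬ ∀ k : Fin d, (Finset.univ.filter fun j => dirs j = k).card = idx k) →
        iteratedFDeriv ℝ n (f ∘ ψ) 0 (fun j => Pi.single (dirs j) 1)
          = iteratedFDeriv ℝ n f 0 (fun j => Pi.single (dirs j) 1)) ∧
      ((∀ k : Fin d, (Finset.univ.filter fun j => dirs j = k).card = idx k) →
        iteratedFDeriv ℝ n (f ∘ ψ) 0 (fun j => Pi.single (dirs j) 1)
          = iteratedFDeriv ℝ n f 0 (fun j => Pi.single (dirs j) 1)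
            - ∑ k : Fin d, if (k : ℕ) < r then
                c k * fderiv ℝ f 0 (Pi.single k 1) else 0)) := by
  -- setup
  set C : ℝ := ∏ j, ((idx j).factorial : ℝ) with hCdef
  have hC : C ≠ 0 := by
    rw [hCdef]
    apply Finset.prod_ne_zero_iff.mpr
    intro j _
    exact_mod_cast (Nat.factorial_pos (idx j)).ne'
  set u : (Fin d → ℝ) → ℝ := mono d C⁻¹ idx with hudef
  set w : Fin d → ℝ := fun k => if (k : ℕ) < r then c k else 0 with hwdef
  have hu : ContDiff ℝ (⊤ : ℕ∞) u := mono_smooth d C⁻¹ idx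
  -- the inverse is the opposite shear
  have hψf : ψ = fun θ => θ - u θ • w := by
    funext θ
    have hkey : φ (θ - u θ • w) = θ := by
      funext k
      rw [hφ]
      have hprod : ∏ j, (θ - u θ • w) j ^ idx j = ∏ j, θ j ^ idx j := by
        apply Finset.prod_congr rfl
        intro j _
        rcases Nat.eq_zero_or_pos (idx j) with h0 | hpos
        · rw [h0, pow_zero, pow_zero]
        · have hjr : ¬ ((j : ℕ) < r) := fun hc => by
            have := hsupp j hc; omega
          have hwj : w j = 0 := if_neg hjr
          simp [hwj]
      by_cases hk : (k : ℕ) < r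
      · rw [if_pos hk, hprod]
        simp only [Pi.sub_apply, Pi.smul_apply, smul_eq_mul]
        rw [show w k = c k from if_pos hk]
        have hueq : u θ = C⁻¹ * ∏ j, θ j ^ idx j := rfl
        rw [hueq, div_eq_mul_inv]
        ring
      · rw [if_neg hk]
        simp only [Pi.sub_apply, Pi.smul_apply, smul_eq_mul]
        rw [show w k = 0 from if_neg hk]
        ring
    calc ψ θ = ψ (φ (θ - u θ • w)) := by rw [hkey]
      _ = θ - u θ • w := hψφ _
  have hψs : ContDiff ℝ (⊤ : ℕ∞) ψ := psi_smooth hψf hu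
  have hu0 : u 0 = 0 := by
    have : ∃ j, idx j ≠ 0 := by
      by_contra hcon
      push_neg at hcon
      simp [hcon] at hm
      omega
    obtain ⟨j, hj⟩ := this
    show C⁻¹ * ∏ j, (0:ℝ) ^ idx j = 0
    rw [Finset.prod_eq_zero (Finset.mem_univ j) (by simp [zero_pow hj]), mul_zero]
  have hψ0 : ψ 0 = 0 := by
    rw [hψf]
    simp [hu0]
  have hum : ∀ M : List (Fin d), M.length < m → DL d M u 0 = 0 := by
    intro M hM
    exact DL_mono_lt d M C⁻¹ idx (by rw [← hm]; exact hM)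
  intro n dirs hdirs hnm
  have hcompeq : f ∘ ψ = fun θ => f (ψ θ) := rfl
  rcases Nat.eq_zero_or_pos n with rfl | hn
  · constructor
    · intro _
      rw [iteratedFDeriv_zero_apply, iteratedFDeriv_zero_apply]
      show f (ψ 0) = f 0
      rw [hψ0]
    · intro hall
      exfalso
      have : ∀ k : Fin d, idx k = 0 := by
        intro k
        have := hall k
        simpa using this.symm
      simp [this] at hm
      omega
  · -- positive order
    set L : List (Fin d) := (List.ofFn dirs).reverse with hLdef
    have hLlen : L.length = n := by simp [hLdef]
    have hLne : L ≠ [] := by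
      intro hcon
      rw [hcon] at hLlen
      simp at hLlen
      omega
    obtain ⟨R, hR, hDL⟩ := shear_main hψf hu hum hf L hLne (by rw [hLlen]; exact hnm)
    have hiterf : iteratedFDeriv ℝ n f 0 (fun j => Pi.single (dirs j) 1) = DL d L f 0 :=
      iter_eq_DL d n dirs f hf 0
    have hiterg : iteratedFDeriv ℝ n (f ∘ ψ) 0 (fun j => Pi.single (dirs j) 1)
        = DL d L (fun θ => f (ψ θ)) 0 := by
      rw [hcompeq] at *
      exact iter_eq_DL d n dirs _ (hf.comp hψs) 0
    have hval : DL d L (fun θ => f (ψ θ)) 0 = DL d L f 0 - DL d L u 0 * Dd d w f 0 := by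
      rw [hDL]
      simp only [hψ0, hR.eval_zero, add_zero]
    have hcnt : ∀ k : Fin d, L.count k = (Finset.univ.filter fun j => dirs j = k).card := by
      intro k
      rw [hLdef, List.count_reverse]
      exact count_ofFn d n dirs k
    constructor
    · -- mismatch case
      intro hnot
      have hu0' : DL d L u 0 = 0 := by
        rcases lt_or_eq_of_le hnm with hlt | heq
        · exact hum L (by rw [hLlen]; exact hlt)
        · rw [hudef]
          rw [DL_mono_eq d L C⁻¹ idx (by rw [hLlen, heq, hm])]
          rw [if_neg, mul_zero]
          intro hcon
          apply hnot
          intro k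
          rw [← hcnt k]
          exact hcon k
      rw [hiterg, hiterf, hval, hu0', zero_mul, sub_zero]
    · -- match case
      intro hall
      have hnm' : n = m := by
        have h1 := sum_card_filter_eq d n dirs
        have h2 : ∑ k, (Finset.univ.filter fun j => dirs j = k).card = ∑ k, idx k :=
          Finset.sum_congr rfl fun k _ => hall k
        omega
      have hu1 : DL d L u 0 = 1 := by
        rw [hudef, DL_mono_eq d L C⁻¹ idx (by rw [hLlen, hnm', hm])]
        rw [if_pos (fun k => (hcnt k).trans (hall k))]
        rw [Nat.cast_prod]
        rw [inv_mul_cancel₀ hC]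
      have hw : Dd d w f 0 = ∑ k : Fin d, if (k : ℕ) < r then
          c k * fderiv ℝ f 0 (Pi.single k 1) else 0 := by
        have hwsum : w = ∑ k : Fin d, w k • (Pi.single k 1 : Fin d → ℝ) := by
          funext j
          rw [Finset.sum_apply]
          simp only [Pi.smul_apply, smul_eq_mul, Pi.single_apply]
          rw [Finset.sum_eq_single j]
          · simp
          · intro i _ hij
            rw [if_neg (fun h => hij h.symm), mul_zero]
          · intro h; exact absurd (Finset.mem_univ j) h
        show fderiv ℝ f 0 w = _
        rw [hwsum, map_sum]
        apply Finset.sum_congr rfl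
        intro k _
        rw [map_smul]
        by_cases hk : (k : ℕ) < r
        · rw [if_pos hk, show w k = c k from if_pos hk]
          simp
        · rw [if_neg hk, show w k = 0 from if_neg hk]
          simp
      rw [hiterg, hiterf, hval, hu1, one_mul, hw]
end
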